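/- arXiv:2411.03756 — 3 statements merged into one kernel-verified Lean document; each statement's English description precedes it below -/
import Mathlib

section
/- For an odd prime power q and a positive integer n with q > 2n, the number of points (x_1, …, x_n) in F_q^n such that x_i ≠ 0 for all i, and x_i ≠ x_j and x_i ≠ -x_j for all i ≠ j, equals (q-1)(q-3)(q-5)⋯(q-(2n-1)). -/
open Finset

section Aux

variable {F : Type*} [Field F] [Fintype F] [DecidableEq F]

lemma aux_count (h2 : (2:F) ≠ 0) (n : ℕ) (y : Fin n → F)
    (hy0 : ∀ i, y i ≠ 0) (hy : ∀ i j : Fin n, i ≠ j → y i ≠ y j ∧ y i ≠ -y j) :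
    Fintype.card {a : F // a ≠ 0 ∧ ∀ i, a ≠ y i ∧ a ≠ -y i}
      = Fintype.card F - (2 * n + 1) := by
  classical
  have hyinj : Function.Injective y := by
    intro i j h
    by_contra hij
    exact (hy i j hij).1 h
  have hninj : Function.Injective (fun i => - y i) := by
    intro i j h
    exact hyinj (neg_injective h)
  have hneq : ∀ i j : Fin n, y i ≠ - y j := by
    intro i j h
    rcases eq_or_ne i j with rfl | hij
    · have h0 : (2:F) * y i = 0 := by linear_combination h
      rcases mul_eq_zero.1 h0 with h' | h'
      · exact h2 h'
      · exact hy0 i h'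
    · exact (hy i j hij).2 h
  set S : Finset F := insert 0 ((univ.image y) ∪ (univ.image fun i => - y i)) with hS
  have hmem : ∀ a : F, a ∉ S ↔ (a ≠ 0 ∧ ∀ i, a ≠ y i ∧ a ≠ -y i) := by
    intro a
    simp only [hS, mem_insert, mem_union, mem_image, mem_univ, true_and, not_or, not_exists]
    constructor
    · rintro ⟨h0, h1, h2'⟩
      exact ⟨h0, fun i => ⟨fun h => h1 i h.symm, fun h => h2' i h.symm⟩⟩
    · rintro ⟨h0, h1⟩
      exact ⟨h0, fun i h => (h1 i).1 h.symm, fun i h => (h1 i).2 h.symm⟩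
  have hcard : S.card = 2 * n + 1 := by
    have hdisj : Disjoint (univ.image y) (univ.image fun i => - y i) := by
      rw [Finset.disjoint_left]
      rintro a ha hb
      rcases mem_image.1 ha with ⟨i, -, rfl⟩
      rcases mem_image.1 hb with ⟨j, -, hj⟩
      exact hneq i j hj.symm
    have h0 : (0:F) ∉ (univ.image y) ∪ (univ.image fun i => - y i) := by
      simp only [mem_union, mem_image, mem_univ, true_and, not_or, not_exists]
      exact ⟨fun i h => hy0 i h, fun i h => hy0 i (neg_eq_zero.1 h)⟩
    rw [hS, Finset.card_insert_of_notMem h0, Finset.card_union_of_disjoint hdisj,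
      Finset.card_image_of_injective _ hyinj,
      Finset.card_image_of_injective _ hninj,
      Finset.card_univ, Fintype.card_fin]
    ring
  calc Fintype.card {a : F // a ≠ 0 ∧ ∀ i, a ≠ y i ∧ a ≠ -y i}
      = Fintype.card {a : F // a ∉ S} := by
        apply Fintype.card_congr
        exact Equiv.subtypeEquivRight (fun a => (hmem a).symm)
    _ = Sᶜ.card := by
        rw [Fintype.card_subtype]
        congr 1
        ext a
        simp [Finset.mem_compl]
    _ = Fintype.card F - (2 * n + 1) := by rw [Finset.card_compl, hcard]

lemma main_count (h2 : (2:F) ≠ 0) :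
    ∀ n : ℕ,
    Fintype.card {x : Fin n → F //
        (∀ i, x i ≠ 0) ∧ ∀ i j : Fin n, i ≠ j → x i ≠ x j ∧ x i ≠ -x j} =
      ∏ i ∈ Finset.range n, (Fintype.card F - (2 * i + 1)) := by
  intro n
  induction n with
  | zero =>
      simp only [Finset.range_zero, Finset.prod_empty]
      rw [Fintype.card_eq_one_iff]
      refine ⟨⟨fun i => i.elim0, ⟨fun i => i.elim0, fun i => i.elim0⟩⟩, ?_⟩
      rintro ⟨x, hx⟩
      ext i
      exact i.elim0
  | succ n ih =>
      classical
      let e : {x : Fin (n+1) → F //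
          (∀ i, x i ≠ 0) ∧ ∀ i j : Fin (n+1), i ≠ j → x i ≠ x j ∧ x i ≠ -x j} ≃
          (y : {x : Fin n → F //
          (∀ i, x i ≠ 0) ∧ ∀ i j : Fin n, i ≠ j → x i ≠ x j ∧ x i ≠ -x j}) ×
          {a : F // a ≠ 0 ∧ ∀ i, a ≠ y.1 i ∧ a ≠ -y.1 i} :=
        { toFun := fun x =>
            ⟨⟨Fin.init x.1, fun i => x.2.1 _,
              fun i j hij => x.2.2 _ _ (fun h => hij (Fin.castSucc_injective n h))⟩,
             ⟨x.1 (Fin.last n), x.2.1 _,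
              fun i => x.2.2 (Fin.last n) (Fin.castSucc i)
                (Fin.ne_of_gt (Fin.castSucc_lt_last i))⟩⟩
          invFun := fun p =>
            ⟨Fin.snoc p.1.1 p.2.1, by
              constructor
              · intro i
                rcases Fin.eq_castSucc_or_eq_last i with ⟨k, rfl⟩ | rfl
                · rw [Fin.snoc_castSucc]; exact p.1.2.1 k
                · rw [Fin.snoc_last]; exact p.2.2.1
              · intro i j hij
                rcases Fin.eq_castSucc_or_eq_last i with ⟨k, rfl⟩ | rfl <;>
                  rcases Fin.eq_castSucc_or_eq_last j with ⟨m, rfl⟩ | rfl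
                · rw [Fin.snoc_castSucc, Fin.snoc_castSucc]
                  exact p.1.2.2 k m (fun h => hij (congrArg Fin.castSucc h))
                · rw [Fin.snoc_castSucc, Fin.snoc_last]
                  refine ⟨fun h => (p.2.2.2 k).1 h.symm, fun h => (p.2.2.2 k).2 ?_⟩
                  linear_combination h
                · rw [Fin.snoc_last, Fin.snoc_castSucc]
                  exact ⟨(p.2.2.2 m).1, (p.2.2.2 m).2⟩
                · exact absurd rfl hij⟩
          left_inv := fun x => Subtype.ext (Fin.snoc_init_self x.1)
          right_inv := fun p => by
            obtain ⟨⟨y, hy⟩, ⟨a, ha⟩⟩ := p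
            refine Sigma.ext (Subtype.ext ?_) ?_
            · simp [Fin.init_snoc]
            · refine (Subtype.heq_iff_coe_eq ?_).2 ?_
              · intro b
                simp [Fin.init_snoc]
              · simp [Fin.snoc_last] }
      rw [Fintype.card_congr e, Fintype.card_sigma]
      have hfib : ∀ y : {x : Fin n → F //
          (∀ i, x i ≠ 0) ∧ ∀ i j : Fin n, i ≠ j → x i ≠ x j ∧ x i ≠ -x j},
          Fintype.card {a : F // a ≠ 0 ∧ ∀ i, a ≠ y.1 i ∧ a ≠ -y.1 i}
            = Fintype.card F - (2 * n + 1) := fun y => aux_count h2 n y.1 y.2.1 y.2.2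
      rw [Finset.sum_congr rfl (fun y _ => hfib y), Finset.sum_const, smul_eq_mul,
        Finset.card_univ, ih, Finset.prod_range_succ]

end Aux

/-- For an odd prime power `q` and positive `n` with `q > 2n`, the number of points of
`F_q^n` with all coordinates nonzero and pairwise neither equal nor opposite is
`(q-1)(q-3)⋯(q-(2n-1))`. -/
theorem stmt_3 (q n : ℕ) (hq : IsPrimePow q) (hodd : Odd q) (hn : 0 < n) (hqn : 2 * n < q)
    (F : Type*) [Field F] [Fintype F] [DecidableEq F] (hF : Fintype.card F = q) :
    Fintype.card {x : Fin n → F //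
        (∀ i, x i ≠ 0) ∧ ∀ i j : Fin n, i ≠ j → x i ≠ x j ∧ x i ≠ -x j} =
      ∏ i ∈ Finset.range n, (q - (2 * i + 1)) := by
  have h2 : (2 : F) ≠ 0 := by
    intro h
    have hd : ringChar F ∣ 2 := ringChar.dvd (by exact_mod_cast h)
    have hchar : ringChar F = 2 :=
      ((Nat.dvd_prime Nat.prime_two).mp hd).resolve_left CharP.ringChar_ne_one
    have heven : Fintype.card F % 2 = 0 := FiniteField.even_card_iff_char_two.mp hchar
    rw [hF] at heven
    obtain ⟨k, hk⟩ := hodd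
    omega
  have := main_count (F := F) h2 n
  rw [hF] at this
  exact this
end

section
/- Let n ≥ 2, let 1 ≤ k < l ≤ n, let a, b be real numbers, let H_0 = {x ∈ R^n : x_k - x_l = a}, and let H = {x ∈ R^n : x_i - x_j = b} for some 1 ≤ i < j ≤ n with (i,j) ≠ (k,l). Let π : H_0 → R^{n-1} be the map deleting the l-th coordinate. If H ∩ H_0 is nonempty, then π(H ∩ H_0) equals: {y ∈ R^{n-1} : y_k - y_j = a + b} if i = l; {y ∈ R^{n-1} : y_k - y_i = a - b} if j = l; and {y ∈ R^{n-1} : y_i - y_j = b} otherwise (with indices reindexed after deleting coordinate l). In particular, π(H ∩ H_0) is again a hyperplane of the form {difference of two coordinates = constant}. -/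
/-- Restriction of a hyperplane `x_i - x_j = b` to `H₀ = {x_k - x_l = a}` under the
projection deleting the `l`-th coordinate: the image is again a hyperplane of the form
"difference of two coordinates = constant", with the stated constants (indices reindexed
via `Fin.succAbove`). Ambient dimension is `n + 1 ≥ 2`. -/
theorem stmt_9 (n : ℕ) (hn : 1 ≤ n) (k l i j : Fin (n + 1))
    (hkl : k < l) (hij : i < j) (hne : (i, j) ≠ (k, l)) (a b : ℝ)
    (π : (Fin (n + 1) → ℝ) → (Fin n → ℝ))
    (hπ : ∀ x m, π x m = x (l.succAbove m))
    (hinter : ({x : Fin (n + 1) → ℝ | x i - x j = b} ∩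
        {x : Fin (n + 1) → ℝ | x k - x l = a}).Nonempty) :
    (i = l → ∀ k' j' : Fin n, l.succAbove k' = k → l.succAbove j' = j →
      π '' ({x | x i - x j = b} ∩ {x | x k - x l = a}) =
        {y : Fin n → ℝ | y k' - y j' = a + b}) ∧
    (j = l → ∀ k' i' : Fin n, l.succAbove k' = k → l.succAbove i' = i →
      π '' ({x | x i - x j = b} ∩ {x | x k - x l = a}) =
        {y : Fin n → ℝ | y k' - y i' = a - b}) ∧
    (i ≠ l → j ≠ l → ∀ i' j' : Fin n, l.succAbove i' = i → l.succAbove j' = j →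
      π '' ({x | x i - x j = b} ∩ {x | x k - x l = a}) =
        {y : Fin n → ℝ | y i' - y j' = b}) := by
  refine ⟨?_, ?_, ?_⟩
  · intro hil k' j' hk' hj'
    ext y
    constructor
    · rintro ⟨x, ⟨hx1, hx2⟩, rfl⟩
      simp only [Set.mem_setOf_eq, hπ, hk', hj']
      simp only [Set.mem_setOf_eq] at hx1 hx2
      rw [hil] at hx1
      linarith
    · intro hy
      simp only [Set.mem_setOf_eq] at hy
      set x : Fin (n + 1) → ℝ := Fin.insertNth l (y k' - a) y with hxdef
      have hl : x l = y k' - a := by rw [hxdef]; exact Fin.insertNth_apply_same (α := fun _ => ℝ) l _ y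
      have hsa : ∀ m, x (l.succAbove m) = y m := fun m =>
        by rw [hxdef]; exact Fin.insertNth_apply_succAbove (α := fun _ => ℝ) l _ y m
      refine ⟨x, ⟨?_, ?_⟩, funext fun m => by rw [hπ, hsa]⟩
      · show x i - x j = b
        rw [hil, hl, ← hj', hsa]; linarith
      · show x k - x l = a
        rw [hl, ← hk', hsa]; ring
  · intro hjl k' i' hk' hi'
    ext y
    constructor
    · rintro ⟨x, ⟨hx1, hx2⟩, rfl⟩
      simp only [Set.mem_setOf_eq, hπ, hk', hi']
      simp only [Set.mem_setOf_eq] at hx1 hx2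
      rw [hjl] at hx1
      linarith
    · intro hy
      simp only [Set.mem_setOf_eq] at hy
      set x : Fin (n + 1) → ℝ := Fin.insertNth l (y k' - a) y with hxdef
      have hl : x l = y k' - a := by rw [hxdef]; exact Fin.insertNth_apply_same (α := fun _ => ℝ) l _ y
      have hsa : ∀ m, x (l.succAbove m) = y m := fun m =>
        by rw [hxdef]; exact Fin.insertNth_apply_succAbove (α := fun _ => ℝ) l _ y m
      refine ⟨x, ⟨?_, ?_⟩, funext fun m => by rw [hπ, hsa]⟩
      · show x i - x j = b
        rw [hjl, hl, ← hi', hsa]; linarith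
      · show x k - x l = a
        rw [hl, ← hk', hsa]; ring
  · intro hil hjl i' j' hi' hj'
    obtain ⟨k', hk'⟩ := Fin.exists_succAbove_eq (hkl.ne : k ≠ l)
    ext y
    constructor
    · rintro ⟨x, ⟨hx1, hx2⟩, rfl⟩
      simp only [Set.mem_setOf_eq, hπ, hi', hj']
      exact hx1
    · intro hy
      simp only [Set.mem_setOf_eq] at hy
      set x : Fin (n + 1) → ℝ := Fin.insertNth l (y k' - a) y with hxdef
      have hl : x l = y k' - a := by rw [hxdef]; exact Fin.insertNth_apply_same (α := fun _ => ℝ) l _ y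
      have hsa : ∀ m, x (l.succAbove m) = y m := fun m =>
        by rw [hxdef]; exact Fin.insertNth_apply_succAbove (α := fun _ => ℝ) l _ y m
      refine ⟨x, ⟨?_, ?_⟩, funext fun m => by rw [hπ, hsa]⟩
      · show x i - x j = b
        rw [← hi', ← hj', hsa, hsa]; exact hy
      · show x k - x l = a
        rw [hl, ← hk', hsa]; ring
end

section
/- Let n ≥ 2, let 1 ≤ k ≤ n, let a, b be real numbers, let H_0 = {x ∈ R^n : x_k = a}, and let π : H_0 → R^{n-1} delete the k-th coordinate. For H = {x : x_i - x_j = b} with i ≠ j: if i = k then π(H ∩ H_0) = {y : y_j = a - b}; if j = k then π(H ∩ H_0) = {y : y_i = a + b}; otherwise π(H ∩ H_0) = {y : y_i - y_j = b} (indices reindexed after deleting coordinate k). In each case π(H ∩ H_0) is a hyperplane of type B form (a single coordinate equal to a constant, or a difference of two coordinates equal to a constant). -/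
/-- Restriction of a hyperplane `x_i - x_j = b` (`i ≠ j`) to `H₀ = {x_k = a}` under the
projection deleting the `k`-th coordinate: the image is again a hyperplane of type `B` form
(a single coordinate equal to a constant, or a difference of two coordinates equal to a
constant), with the stated constants. Ambient dimension `n + 1 ≥ 2`. -/
theorem stmt_11 (n : ℕ) (hn : 1 ≤ n) (k i j : Fin (n + 1)) (hij : i ≠ j) (a b : ℝ)
    (π : (Fin (n + 1) → ℝ) → (Fin n → ℝ))
    (hπ : ∀ x m, π x m = x (k.succAbove m)) :
    (i = k → ∀ j' : Fin n, k.succAbove j' = j →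
      π '' ({x | x i - x j = b} ∩ {x : Fin (n + 1) → ℝ | x k = a}) =
        {y : Fin n → ℝ | y j' = a - b}) ∧
    (j = k → ∀ i' : Fin n, k.succAbove i' = i →
      π '' ({x | x i - x j = b} ∩ {x : Fin (n + 1) → ℝ | x k = a}) =
        {y : Fin n → ℝ | y i' = a + b}) ∧
    (i ≠ k → j ≠ k → ∀ i' j' : Fin n, k.succAbove i' = i → k.succAbove j' = j →
      π '' ({x | x i - x j = b} ∩ {x : Fin (n + 1) → ℝ | x k = a}) =
        {y : Fin n → ℝ | y i' - y j' = b}) := by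
  refine ⟨?_, ?_, ?_⟩
  · rintro rfl j' hj'
    ext y
    constructor
    · rintro ⟨x, ⟨hx1, hx2⟩, rfl⟩
      simp only [Set.mem_setOf_eq] at *
      rw [hπ, hj']
      rw [hx2] at hx1; linarith
    · intro hy
      refine ⟨i.insertNth a y, ⟨?_, by simp⟩, ?_⟩
      · simp only [Set.mem_setOf_eq]
        rw [← hj', Fin.insertNth_apply_same, Fin.insertNth_apply_succAbove]
        simp only [Set.mem_setOf_eq] at hy; linarith
      · funext m; rw [hπ, Fin.insertNth_apply_succAbove]
  · rintro rfl i' hi'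
    ext y
    constructor
    · rintro ⟨x, ⟨hx1, hx2⟩, rfl⟩
      simp only [Set.mem_setOf_eq] at *
      rw [hπ, hi']
      rw [hx2] at hx1; linarith
    · intro hy
      refine ⟨j.insertNth a y, ⟨?_, by simp⟩, ?_⟩
      · simp only [Set.mem_setOf_eq]
        rw [← hi', Fin.insertNth_apply_same, Fin.insertNth_apply_succAbove]
        simp only [Set.mem_setOf_eq] at hy; linarith
      · funext m; rw [hπ, Fin.insertNth_apply_succAbove]
  · intro hik hjk i' j' hi' hj'
    ext y
    constructor
    · rintro ⟨x, ⟨hx1, hx2⟩, rfl⟩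
      simp only [Set.mem_setOf_eq] at *
      rw [hπ, hπ, hi', hj']; exact hx1
    · intro hy
      refine ⟨k.insertNth a y, ⟨?_, by simp⟩, ?_⟩
      · simp only [Set.mem_setOf_eq]
        rw [← hi', ← hj', Fin.insertNth_apply_succAbove, Fin.insertNth_apply_succAbove]
        exact hy
      · funext m; rw [hπ, Fin.insertNth_apply_succAbove]
end
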